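/- Let r ≥ 0, and suppose γ̂ > 0 satisfies log₂(1+γ̂) ≥ r. Define g(γ) = q₁·q₂^(M(γ)) − 1 with q₁ = 2^r, q₂ = e^(Q⁻¹(ε_th)/√n), M(γ) = sqrt(1 − 1/(1+γ)²), and suppose g(γ̂) = γ̂. Then the derivative of g at the fixed point satisfies |g'(γ̂)| = |log₂(1+γ̂) − r| / (γ̂(γ̂+2)·log₂e), and consequently |g'(γ̂)| < ln 2 < 1. -/

import Mathlib

/-!
Write `M(γ) = √(1 - 1/(1+γ)²)`, so that `M' = 1/((1+γ)³ M)` and `(1+γ)² M² = γ(γ+2)`.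
At a fixed point `c·e^{a M(γ̂)} - 1 = γ̂` we have `c·e^{a M(γ̂)} = 1+γ̂` and `a M(γ̂) = ln(1+γ̂) - ln c`,
so the chain rule collapses to `g'(γ̂) = (ln(1+γ̂) - r ln 2)/(γ̂(γ̂+2))`. The numerator lies in
`[0, ln(1+γ̂)] ⊆ [0, γ̂]`, hence `|g'(γ̂)| < 1/2 < ln 2`.
-/

open Real Set Function

lemma one_sub_one_div_one_add_sq_pos {γ : ℝ} (hγ : 0 < γ) : 0 < 1 - 1 / (1 + γ) ^ 2 := by
  have : 1 / (1 + γ) ^ 2 < 1 := by rw [div_lt_one (by positivity)]; nlinarith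
  linarith

lemma hasDerivAt_sqrt_one_sub_one_div_one_add_sq {γ : ℝ} (hγ : 0 < γ) :
    HasDerivAt (fun x => √(1 - 1 / (1 + x) ^ 2))
      (1 / ((1 + γ) ^ 3 * √(1 - 1 / (1 + γ) ^ 2))) γ := by
  have hinner : HasDerivAt (fun x => 1 - 1 / (1 + x) ^ 2) (2 / (1 + γ) ^ 3) γ := by
    have : 1 + γ ≠ 0 := by positivity
    simp only [one_div]
    refine ((((hasDerivAt_id' γ).const_add 1).fun_pow 2).fun_inv (by positivity)).const_sub 1
      |>.congr_deriv ?_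
    field_simp
    ring
  refine (hinner.sqrt (one_sub_one_div_one_add_sq_pos hγ).ne').congr_deriv ?_
  field_simp

theorem hasDerivAt_mul_exp_sub_one_of_isFixedPt {c a γ : ℝ} (hγ : 0 < γ)
    (hfix : IsFixedPt (fun x => c * exp (a * √(1 - 1 / (1 + x) ^ 2)) - 1) γ) :
    HasDerivAt (fun x => c * exp (a * √(1 - 1 / (1 + x) ^ 2)) - 1)
      ((log (1 + γ) - log c) / (γ * (γ + 2))) γ := by
  have hM := hasDerivAt_sqrt_one_sub_one_div_one_add_sq hγ
  set s := √(1 - 1 / (1 + γ) ^ 2)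
  have hprod : c * exp (a * s) = 1 + γ := by linarith [hfix.eq]
  have hc : c ≠ 0 := left_ne_zero_of_mul (by rw [hprod]; positivity)
  have has : a * s = log (1 + γ) - log c := by
    rw [← hprod, log_mul hc (exp_ne_zero _), log_exp]; ring
  have hs2 : (1 + γ) ^ 2 * s ^ 2 = γ * (γ + 2) := by
    have : 1 + γ ≠ 0 := by positivity
    rw [sq_sqrt (one_sub_one_div_one_add_sq_pos hγ).le]
    field_simp
    ring
  have hs : 0 < s := sqrt_pos.2 (one_sub_one_div_one_add_sq_pos hγ)
  refine ((hM.const_mul a).exp.const_mul c).sub_const 1 |>.congr_deriv ?_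
  rw [← hs2, ← has, ← mul_assoc, hprod]
  field_simp

lemma log_one_add_sub_div_lt_half {γ b : ℝ} (hγ : 0 < γ) (hb : 0 ≤ b) :
    (log (1 + γ) - b) / (γ * (γ + 2)) < 1 / 2 := by
  have hlog : log (1 + γ) ≤ γ := by linarith [log_le_sub_one_of_pos (by linarith : 0 < 1 + γ)]
  rw [div_lt_iff₀ (by positivity)]
  nlinarith

/-- Contraction estimate at the fixed point of `g(γ) = q₁·q₂^{M(γ)} − 1` with
`q₁ = 2^r`, `q₂ = e^a` (with `a = Q⁻¹(ε_th)/√n` an arbitrary real),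
`M(γ) = √(1 − 1/(1+γ)²)`: if `γ̂ > 0` is a fixed point with `log₂(1+γ̂) ≥ r ≥ 0`,
then `|g'(γ̂)| = |log₂(1+γ̂) − r| / (γ̂(γ̂+2)·log₂ e)` and `|g'(γ̂)| < ln 2 < 1`. -/
theorem stmt_7 (r a γhat : ℝ) (hr : 0 ≤ r) (hγ : 0 < γhat)
    (hcap : r ≤ Real.logb 2 (1 + γhat))
    (g : ℝ → ℝ)
    (hg : g = fun γ : ℝ =>
      (2:ℝ) ^ r * Real.exp a ^ Real.sqrt (1 - 1 / (1 + γ) ^ 2) - 1)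
    (hfix : g γhat = γhat) :
    |deriv g γhat| =
      |Real.logb 2 (1 + γhat) - r| / (γhat * (γhat + 2) * (Real.log 2)⁻¹) ∧
    |deriv g γhat| < Real.log 2 ∧ Real.log 2 < 1 := by
  simp only [hg, ← exp_mul] at hfix ⊢
  have hderiv := hasDerivAt_mul_exp_sub_one_of_isFixedPt hγ hfix
  rw [log_rpow two_pos] at hderiv
  have hlog2 : 0 < log 2 := log_pos one_lt_two
  have hnum : 0 ≤ log (1 + γhat) - r * log 2 := by
    rw [sub_nonneg, ← le_div_iff₀ hlog2]; exact hcap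
  have hP : 0 < γhat * (γhat + 2) := by positivity
  rw [hderiv.deriv, abs_of_nonneg (div_nonneg hnum hP.le)]
  refine ⟨?_, ?_, by linarith [log_two_lt_d9]⟩
  · rw [abs_of_nonneg (sub_nonneg.2 hcap), logb]
    field_simp
  · linarith [log_one_add_sub_div_lt_half hγ (by positivity : 0 ≤ r * log 2), log_two_gt_d9]
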